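/- For w_t = t^γ with γ > -1 and any integer r > 0, the sequence (-log Δ)^r w_t^#, i.e., the sequence whose t-th term is Σ over compositions given by the coefficients of (-log(1-s))^r applied to the truncated sequence, satisfies (-log Δ)^r w_t^# ∼ (log t)^r t^γ as t → ∞. -/

import Mathlib

/-!
Write `L_ρ(t) = (log t)^ρ t^γ`. Since `(-log Δ)^(r+1) = (-log Δ) ∘ (-log Δ)^r` and
`(-log Δ) f (t) = Σ_{1 ≤ k < t} f (t - k) / k`, it suffices that this convolution turns a sequence
`∼ L_ρ` into one `∼ L_(ρ+1)`. For `f = L_ρ` split the sum at `k = δ t`: for `k ≤ δ t` the value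
`f (t - k)` lies between `(1 - δ)^γ` and `1` times `L_ρ(t)` (up to `log (1 - δ)` in the logarithm)
and `Σ_{k ≤ δ t} 1/k = log t + O_δ(1)`, while for `k > δ t` the weights are at most `1/(δ t)` and
`Σ_{m ≤ t} L_ρ(m) = O(t L_ρ(t))` because `γ > -1`; then let `δ → 0`. A general `f ∼ L_ρ` differs
from `L_ρ` by `o(L_ρ)` plus a finitely supported sequence, whose convolution is `O(1/t)`,
which is `o(L_(ρ+1))`.
-/

/-- Coefficients of `-log(1-s) = Σ_{j≥1} s^j/j`. -/
noncomputable def harmCoef : ℕ → ℝ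
  | 0 => 0
  | j + 1 => 1 / ((j : ℝ) + 1)

/-- Coefficient of `s^j` in `(-log(1-s))^r`, defined by `r`-fold convolution. -/
noncomputable def logCoef : ℕ → ℕ → ℝ
  | 0, 0 => 1
  | 0, _ + 1 => 0
  | r + 1, j => ∑ k ∈ Finset.range (j + 1), harmCoef k * logCoef r (j - k)

open Filter Finset Asymptotics Topology

lemma harmCoef_nonneg (k : ℕ) : 0 ≤ harmCoef k := by
  cases k <;> simp only [harmCoef] <;> positivity

lemma harmCoef_of_ne_zero {k : ℕ} (hk : k ≠ 0) : harmCoef k = (k : ℝ)⁻¹ := by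
  obtain ⟨j, rfl⟩ := Nat.exists_eq_succ_of_ne_zero hk
  simp [harmCoef]

lemma harmCoef_le_inv {x : ℝ} {k : ℕ} (hx : 0 < x) (hxk : x ≤ k) : harmCoef k ≤ x⁻¹ := by
  have hk : (0 : ℝ) < k := hx.trans_le hxk
  rw [harmCoef_of_ne_zero (by exact_mod_cast hk.ne')]
  exact inv_anti₀ hx hxk

lemma sum_range_succ_harmCoef (n : ℕ) : ∑ k ∈ range (n + 1), harmCoef k = harmonic n := by
  simp [sum_range_succ', harmonic, harmCoef]

lemma logCoef_zero_left (j : ℕ) : logCoef 0 j = if j = 0 then 1 else 0 := by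
  cases j <;> simp [logCoef]

lemma sum_range_comp_sub {M : Type*} [AddCommMonoid M] (f : ℕ → M) (t : ℕ) :
    ∑ k ∈ range t, f (t - k) = ∑ m ∈ range t, f (m + 1) := by
  rw [← sum_range_reflect]
  exact sum_congr rfl fun k hk => by rw [mem_range] at hk; congr 1; omega

noncomputable def harmConv (f : ℕ → ℝ) (t : ℕ) : ℝ :=
  ∑ k ∈ range t, harmCoef k * f (t - k)

/-- `((-log Δ)^r w^#)_t`; only the values `w (t - j)` with `t - j ≥ 1` enter, which is the
truncation `w^#`. -/
noncomputable def negLogDiff (r : ℕ) (w : ℕ → ℝ) (t : ℕ) : ℝ :=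
  ∑ j ∈ range t, logCoef r j * w (t - j)

lemma negLogDiff_zero (w : ℕ → ℝ) {t : ℕ} (ht : t ≠ 0) : negLogDiff 0 w t = w t := by
  rw [negLogDiff, sum_eq_single 0] <;> simp_all [logCoef_zero_left, Nat.pos_iff_ne_zero]

lemma negLogDiff_succ (r : ℕ) (w : ℕ → ℝ) (t : ℕ) :
    negLogDiff (r + 1) w t = harmConv (negLogDiff r w) t := by
  simp only [negLogDiff, harmConv, logCoef, sum_mul, mul_sum, range_eq_Ico]
  rw [← sum_Ico_Ico_comm]
  refine sum_congr rfl fun i _ => ?_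
  rw [sum_Ico_eq_sum_range, ← Nat.Ico_zero_eq_range]
  refine sum_congr rfl fun k _ => ?_
  rw [Nat.add_sub_cancel_left, Nat.sub_sub, mul_assoc]

lemma harmConv_le {g : ℕ → ℝ} (hg : ∀ m, 0 ≤ g m) {K t : ℕ} (hKt : K < t) {a : ℝ}
    (ha : ∀ k ≤ K, g (t - k) ≤ a) :
    harmConv g t ≤ a * (1 + Real.log K) + (∑ m ∈ range t, g (m + 1)) / (K + 1) := by
  have ha0 : 0 ≤ a := (hg _).trans (ha 0 K.zero_le)
  rw [harmConv, ← sum_range_add_sum_Ico _ hKt]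
  gcongr ?_ + ?_
  · calc ∑ k ∈ range (K + 1), harmCoef k * g (t - k)
        ≤ ∑ k ∈ range (K + 1), harmCoef k * a := by
          gcongr with k hk
          · exact harmCoef_nonneg k
          · exact ha k (Nat.lt_succ_iff.1 (mem_range.1 hk))
      _ = a * harmonic K := by rw [← sum_mul, sum_range_succ_harmCoef, mul_comm]
      _ ≤ a * (1 + Real.log K) := by gcongr; exact harmonic_le_one_add_log K
  · calc ∑ k ∈ Ico (K + 1) t, harmCoef k * g (t - k)
        ≤ ∑ k ∈ Ico (K + 1) t, ((K : ℝ) + 1)⁻¹ * g (t - k) := by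
          gcongr with k hk
          · exact hg _
          · exact harmCoef_le_inv (by positivity) (by exact_mod_cast (mem_Ico.1 hk).1)
      _ ≤ ∑ k ∈ range t, ((K : ℝ) + 1)⁻¹ * g (t - k) := by
          gcongr
          · exact fun k _ _ => mul_nonneg (by positivity) (hg _)
          · exact fun k hk => mem_range.2 (mem_Ico.1 hk).2
      _ = (∑ m ∈ range t, g (m + 1)) / (K + 1) := by
          rw [← mul_sum, sum_range_comp_sub, inv_mul_eq_div]

lemma le_harmConv {g : ℕ → ℝ} (hg : ∀ m, 0 ≤ g m) {K t : ℕ} (hKt : K < t) {b : ℝ} (hb0 : 0 ≤ b)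
    (hb : ∀ k ≤ K, b ≤ g (t - k)) : b * Real.log (K + 1) ≤ harmConv g t :=
  calc b * Real.log (K + 1) ≤ b * harmonic K := by
        gcongr; exact_mod_cast log_add_one_le_harmonic K
    _ = ∑ k ∈ range (K + 1), harmCoef k * b := by
        rw [← sum_mul, sum_range_succ_harmCoef, mul_comm]
    _ ≤ ∑ k ∈ range (K + 1), harmCoef k * g (t - k) := by
        gcongr with k hk
        · exact harmCoef_nonneg k
        · exact hb k (Nat.lt_succ_iff.1 (mem_range.1 hk))
    _ ≤ harmConv g t :=
        sum_le_sum_of_subset_of_nonneg (range_subset_range.2 hKt)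
          fun k _ _ => mul_nonneg (harmCoef_nonneg k) (hg _)

lemma isEquivalent_harmConv {f g : ℕ → ℝ} (hfg : f ~[atTop] g) (hg : ∀ m, 0 ≤ g m)
    (hgrow : (fun t : ℕ => (t : ℝ)⁻¹) =o[atTop] harmConv g) :
    harmConv f ~[atTop] harmConv g := by
  have hsub : harmConv f - harmConv g = harmConv (f - g) := by
    ext t; simp [harmConv, ← sum_sub_distrib, mul_sub]
  rw [IsEquivalent, hsub, isLittleO_iff]
  intro c hc
  obtain ⟨M, hM⟩ := eventually_atTop.1 (hfg.def (half_pos hc))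
  set e : ℕ → ℝ := fun m => if m < M then |f m - g m| else 0
  have he : ∀ m, |f m - g m| ≤ c / 2 * g m + e m := by
    intro m
    by_cases hm : m < M
    · simp only [e, if_pos hm]; linarith [mul_nonneg (half_pos hc).le (hg m)]
    · simpa [e, hm, abs_of_nonneg (hg m)] using hM m (not_lt.1 hm)
  set B := ∑ m ∈ range M, e (m + 1)
  have hB : 0 ≤ B := sum_nonneg fun m _ => by positivity
  filter_upwards [eventually_ge_atTop (2 * M + 1), (hgrow.const_mul_left (2 * B)).def (half_pos hc)]
    with t ht hgt
  have htpos : (0 : ℝ) < t := by exact_mod_cast (show 0 < t by omega)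
  have hconv_e : ∑ k ∈ range t, harmCoef k * e (t - k) ≤ 2 * B * (t : ℝ)⁻¹ := by
    calc ∑ k ∈ range t, harmCoef k * e (t - k)
        ≤ ∑ k ∈ range t, ((t : ℝ) / 2)⁻¹ * e (t - k) := by
          refine sum_le_sum fun k hk => ?_
          by_cases hk' : t - k < M
          · refine mul_le_mul_of_nonneg_right (harmCoef_le_inv (by positivity) ?_) (by positivity)
            rw [div_le_iff₀ two_pos]
            exact_mod_cast (by omega : t ≤ k * 2)
          · simp [e, hk']
      _ = 2 * B * (t : ℝ)⁻¹ := by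
          rw [← mul_sum, sum_range_comp_sub, ← sum_range_add_sum_Ico _ (by omega : M ≤ t),
            sum_eq_zero (s := Ico M t) fun m hm => if_neg (by rw [mem_Ico] at hm; omega), add_zero]
          field_simp
          rfl
  calc ‖harmConv (f - g) t‖ ≤ ∑ k ∈ range t, harmCoef k * |f (t - k) - g (t - k)| := by
        refine (abs_sum_le_sum_abs _ _).trans_eq (sum_congr rfl fun k _ => ?_)
        rw [abs_mul, abs_of_nonneg (harmCoef_nonneg k), Pi.sub_apply]
    _ ≤ ∑ k ∈ range t, harmCoef k * (c / 2 * g (t - k) + e (t - k)) := by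
        gcongr with k
        · exact harmCoef_nonneg k
        · exact he _
    _ = c / 2 * harmConv g t + ∑ k ∈ range t, harmCoef k * e (t - k) := by
        rw [harmConv, mul_sum, ← sum_add_distrib]
        exact sum_congr rfl fun k _ => by ring
    _ ≤ c / 2 * ‖harmConv g t‖ + c / 2 * ‖harmConv g t‖ := by
        gcongr
        · exact Real.le_norm_self _
        · exact hconv_e.trans ((Real.le_norm_self _).trans hgt)
    _ = c * ‖harmConv g t‖ := by ring

lemma mul_add_one_rpow_sub_one_le {p x : ℝ} (hp0 : 0 ≤ p) (hp1 : p ≤ 1) (hx : 0 ≤ x) :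
    p * (x + 1) ^ (p - 1) ≤ (x + 1) ^ p - x ^ p := by
  have hx1 : 0 < x + 1 := by linarith
  have hs : -1 ≤ -(x + 1)⁻¹ := neg_le_neg (inv_le_one_of_one_le₀ (by linarith))
  have hb := rpow_one_add_le_one_add_mul_self hs hp0 hp1
  rw [show 1 + -(x + 1)⁻¹ = x / (x + 1) by field_simp; ring, Real.div_rpow hx hx1.le,
    div_le_iff₀ (Real.rpow_pos_of_pos hx1 p)] at hb
  rw [Real.rpow_sub_one hx1.ne']
  have : p * -(x + 1)⁻¹ * (x + 1) ^ p = -(p * ((x + 1) ^ p / (x + 1))) := by ring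
  linarith

lemma sum_range_add_one_rpow_le {γ : ℝ} (hγ : -1 < γ) (n : ℕ) :
    ∑ m ∈ range n, ((m : ℝ) + 1) ^ γ ≤ max 1 (γ + 1)⁻¹ * (n : ℝ) ^ (γ + 1) := by
  rcases le_or_gt 0 γ with hγ0 | hγ0
  · calc ∑ m ∈ range n, ((m : ℝ) + 1) ^ γ ≤ ∑ m ∈ range n, (n : ℝ) ^ γ := by
          gcongr with m hm
          exact_mod_cast mem_range.1 hm
      _ = (n : ℝ) ^ (γ + 1) := by
          rw [sum_const, card_range, nsmul_eq_mul, Real.rpow_add_one' n.cast_nonneg (by linarith),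
            mul_comm]
      _ ≤ max 1 (γ + 1)⁻¹ * (n : ℝ) ^ (γ + 1) :=
          le_mul_of_one_le_left (by positivity) (le_max_left _ _)
  · have hp : 0 < γ + 1 := by linarith
    calc ∑ m ∈ range n, ((m : ℝ) + 1) ^ γ
        ≤ ∑ m ∈ range n, (((m + 1 : ℕ) : ℝ) ^ (γ + 1) - (m : ℝ) ^ (γ + 1)) / (γ + 1) := by
          gcongr with m
          rw [le_div_iff₀ hp, mul_comm, Nat.cast_succ]
          simpa using mul_add_one_rpow_sub_one_le hp.le (by linarith) m.cast_nonneg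
      _ = (γ + 1)⁻¹ * (n : ℝ) ^ (γ + 1) := by
          rw [← sum_div, sum_range_sub (fun m : ℕ => (m : ℝ) ^ (γ + 1)), Nat.cast_zero,
            Real.zero_rpow hp.ne', sub_zero, inv_mul_eq_div]
      _ ≤ max 1 (γ + 1)⁻¹ * (n : ℝ) ^ (γ + 1) := by gcongr; exact le_max_right _ _

lemma rpow_le_max_of_mem_Icc {a b x : ℝ} (ha : 0 < a) (hax : a ≤ x) (hxb : x ≤ b) (γ : ℝ) :
    x ^ γ ≤ max (a ^ γ) (b ^ γ) := by
  rcases le_total 0 γ with hγ | hγ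
  · exact (Real.rpow_le_rpow (ha.le.trans hax) hxb hγ).trans (le_max_right _ _)
  · exact (Real.rpow_le_rpow_of_nonpos ha hax hγ).trans (le_max_left _ _)

lemma min_le_rpow_of_mem_Icc {a b x : ℝ} (ha : 0 < a) (hax : a ≤ x) (hxb : x ≤ b) (γ : ℝ) :
    min (a ^ γ) (b ^ γ) ≤ x ^ γ := by
  rcases le_total 0 γ with hγ | hγ
  · exact (min_le_left _ _).trans (Real.rpow_le_rpow ha.le hax hγ)
  · exact (min_le_right _ _).trans (Real.rpow_le_rpow_of_nonpos (ha.trans_le hax) hxb hγ)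

lemma tendsto_of_forall_eventually_between {ι α β : Type*} [TopologicalSpace β] [LinearOrder β]
    [OrderTopology β] {p : Filter ι} [p.NeBot] {l : Filter α} {u : α → β} {lo hi : ι → α → β}
    {clo chi : ι → β} {c : β} (hclo : Tendsto clo p (𝓝 c)) (hchi : Tendsto chi p (𝓝 c))
    (hlo : ∀ i, Tendsto (lo i) l (𝓝 (clo i))) (hhi : ∀ i, Tendsto (hi i) l (𝓝 (chi i)))
    (hbetween : ∀ᶠ i in p, ∀ᶠ x in l, lo i x ≤ u x ∧ u x ≤ hi i x) : Tendsto u l (𝓝 c) := by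
  rw [tendsto_order]
  refine ⟨fun a ha => ?_, fun b hb => ?_⟩
  · obtain ⟨i, hai, hi⟩ := ((hclo.eventually (lt_mem_nhds ha)).and hbetween).exists
    filter_upwards [(hlo i).eventually (lt_mem_nhds hai), hi] with x h1 h2 using h1.trans_le h2.1
  · obtain ⟨i, hib, hi⟩ := ((hchi.eventually (gt_mem_nhds hb)).and hbetween).exists
    filter_upwards [(hhi i).eventually (gt_mem_nhds hib), hi] with x h1 h2 using h2.2.trans_lt h1

lemma tendsto_log_natCast_atTop : Tendsto (fun t : ℕ => Real.log t) atTop atTop :=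
  Real.tendsto_log_atTop.comp tendsto_natCast_atTop_atTop

lemma tendsto_log_add_div_log (a : ℝ) :
    Tendsto (fun t : ℕ => (Real.log t + a) / Real.log t) atTop (𝓝 1) := by
  have h := tendsto_const_nhds (x := (1 : ℝ)).add
    (tendsto_const_nhds (x := a).div_atTop tendsto_log_natCast_atTop)
  rw [add_zero] at h
  refine h.congr' ?_
  filter_upwards [tendsto_log_natCast_atTop.eventually_gt_atTop 0] with t ht
  field_simp

noncomputable def logRpow (ρ : ℕ) (γ : ℝ) (t : ℕ) : ℝ := Real.log t ^ ρ * (t : ℝ) ^ γ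

lemma logRpow_nonneg (ρ : ℕ) (γ : ℝ) (m : ℕ) : 0 ≤ logRpow ρ γ m :=
  mul_nonneg (pow_nonneg (Real.log_natCast_nonneg m) ρ) (Real.rpow_nonneg m.cast_nonneg γ)

lemma logRpow_pos (ρ : ℕ) (γ : ℝ) {t : ℕ} (ht : 2 ≤ t) : 0 < logRpow ρ γ t := by
  have htR : (2 : ℝ) ≤ t := by exact_mod_cast ht
  exact mul_pos (pow_pos (Real.log_pos (by linarith)) ρ) (Real.rpow_pos_of_pos (by linarith) γ)

lemma eventually_logRpow_ne_zero (ρ : ℕ) (γ : ℝ) : ∀ᶠ t in atTop, logRpow ρ γ t ≠ 0 :=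
  (eventually_ge_atTop 2).mono fun _ ht => (logRpow_pos ρ γ ht).ne'

lemma logRpow_le_of_mem_Icc (ρ : ℕ) (γ : ℝ) {δ : ℝ} (hδ : δ < 1) {t m : ℕ} (ht : 0 < t)
    (hm : (1 - δ) * t ≤ m) (hmt : m ≤ t) :
    logRpow ρ γ m ≤ max ((1 - δ) ^ γ) 1 * logRpow ρ γ t := by
  have hδ' : 0 < 1 - δ := sub_pos.2 hδ
  have ha : 0 < (1 - δ) * t := by positivity
  have hmt' : (m : ℝ) ≤ t := by exact_mod_cast hmt
  have hlog : Real.log m ^ ρ ≤ Real.log t ^ ρ :=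
    pow_le_pow_left₀ (Real.log_natCast_nonneg m) (Real.log_le_log (ha.trans_le hm) hmt') ρ
  have hpow : (m : ℝ) ^ γ ≤ max ((1 - δ) ^ γ) 1 * (t : ℝ) ^ γ := by
    refine (rpow_le_max_of_mem_Icc ha hm hmt' γ).trans_eq ?_
    rw [max_mul_of_nonneg _ _ (by positivity), one_mul, Real.mul_rpow hδ'.le t.cast_nonneg]
  calc logRpow ρ γ m ≤ Real.log t ^ ρ * (max ((1 - δ) ^ γ) 1 * (t : ℝ) ^ γ) :=
        mul_le_mul hlog hpow (by positivity) (pow_nonneg (Real.log_natCast_nonneg t) ρ)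
    _ = max ((1 - δ) ^ γ) 1 * logRpow ρ γ t := by rw [logRpow]; ring

lemma le_logRpow_of_mem_Icc (ρ : ℕ) (γ : ℝ) {δ : ℝ} (hδ : δ < 1) {t m : ℕ}
    (ht : 1 ≤ (1 - δ) * t) (hm : (1 - δ) * t ≤ m) (hmt : m ≤ t) :
    min ((1 - δ) ^ γ) 1 * ((Real.log t + Real.log (1 - δ)) ^ ρ * (t : ℝ) ^ γ) ≤
      logRpow ρ γ m := by
  have hδ' : 0 < 1 - δ := sub_pos.2 hδ
  have ha : 0 < (1 - δ) * t := by linarith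
  have htpos : (0 : ℝ) < t := pos_of_mul_pos_right ha hδ'.le
  have hmt' : (m : ℝ) ≤ t := by exact_mod_cast hmt
  have hlog_eq : Real.log t + Real.log (1 - δ) = Real.log ((1 - δ) * t) := by
    rw [Real.log_mul hδ'.ne' htpos.ne', add_comm]
  have hlog : (Real.log t + Real.log (1 - δ)) ^ ρ ≤ Real.log m ^ ρ := by
    rw [hlog_eq]
    exact pow_le_pow_left₀ (Real.log_nonneg ht) (Real.log_le_log ha hm) ρ
  have hpow : min ((1 - δ) ^ γ) 1 * (t : ℝ) ^ γ ≤ (m : ℝ) ^ γ := by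
    refine (min_le_rpow_of_mem_Icc ha hm hmt' γ).trans_eq' ?_
    rw [min_mul_of_nonneg _ _ (by positivity), one_mul, Real.mul_rpow hδ'.le t.cast_nonneg]
  calc min ((1 - δ) ^ γ) 1 * ((Real.log t + Real.log (1 - δ)) ^ ρ * (t : ℝ) ^ γ)
        = (Real.log t + Real.log (1 - δ)) ^ ρ * (min ((1 - δ) ^ γ) 1 * (t : ℝ) ^ γ) := by ring
    _ ≤ logRpow ρ γ m := mul_le_mul hlog hpow (by positivity) (by positivity)

lemma floor_mul_natCast_lt {δ : ℝ} (hδ0 : 0 ≤ δ) (hδ1 : δ < 1) {t : ℕ} (ht : 0 < t) :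
    ⌊δ * t⌋₊ < t :=
  (Nat.floor_lt (by positivity)).2 (mul_lt_of_lt_one_left (by exact_mod_cast ht) hδ1)

lemma one_sub_mul_le_natCast_sub {δ : ℝ} (hδ0 : 0 ≤ δ) {t k : ℕ} (hk : k ≤ ⌊δ * t⌋₊)
    (hkt : k ≤ t) : (1 - δ) * t ≤ ((t - k : ℕ) : ℝ) := by
  have : (k : ℝ) ≤ δ * t := (Nat.cast_le.2 hk).trans (Nat.floor_le (by positivity))
  rw [Nat.cast_sub hkt]
  linarith

lemma harmConv_logRpow_le (ρ : ℕ) {γ : ℝ} (hγ : -1 < γ) {δ : ℝ} (hδ : δ ∈ Set.Ioo 0 1) {t : ℕ}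
    (ht : 0 < t) :
    harmConv (logRpow ρ γ) t ≤
      (max ((1 - δ) ^ γ) 1 * (Real.log t + 1) + max 1 (γ + 1)⁻¹ / δ) * logRpow ρ γ t := by
  obtain ⟨hδ0, hδ1⟩ := hδ
  set K := ⌊δ * t⌋₊
  have htR : (0 : ℝ) < t := by exact_mod_cast ht
  have hδK : δ * t < K + 1 := Nat.lt_floor_add_one _
  have hKt : K < t := floor_mul_natCast_lt hδ0.le hδ1 ht
  have hhead : ∀ k ≤ K, logRpow ρ γ (t - k) ≤ max ((1 - δ) ^ γ) 1 * logRpow ρ γ t :=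
    fun k hk => logRpow_le_of_mem_Icc ρ γ hδ1 ht
      (one_sub_mul_le_natCast_sub hδ0.le hk (hk.trans hKt.le)) (Nat.sub_le t k)
  have htail : ∑ m ∈ range t, logRpow ρ γ (m + 1) ≤
      Real.log t ^ ρ * (max 1 (γ + 1)⁻¹ * (t : ℝ) ^ (γ + 1)) := by
    calc ∑ m ∈ range t, logRpow ρ γ (m + 1)
        ≤ ∑ m ∈ range t, Real.log t ^ ρ * ((m : ℝ) + 1) ^ γ := by
          gcongr with m hm
          rw [logRpow, Nat.cast_succ]
          gcongr
          · exact Real.log_nonneg (by linarith [m.cast_nonneg (α := ℝ)])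
          · exact_mod_cast mem_range.1 hm
      _ ≤ Real.log t ^ ρ * (max 1 (γ + 1)⁻¹ * (t : ℝ) ^ (γ + 1)) := by
          rw [← mul_sum]
          gcongr
          exact sum_range_add_one_rpow_le hγ t
  have hlogK : Real.log K ≤ Real.log t := by
    rcases K.eq_zero_or_pos with hK | hK
    · simp [hK, Real.log_natCast_nonneg]
    · exact Real.log_le_log (by exact_mod_cast hK) (by exact_mod_cast hKt.le)
  calc harmConv (logRpow ρ γ) t
      ≤ max ((1 - δ) ^ γ) 1 * logRpow ρ γ t * (1 + Real.log K) +
          (∑ m ∈ range t, logRpow ρ γ (m + 1)) / (K + 1) :=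
        harmConv_le (logRpow_nonneg ρ γ) hKt hhead
    _ ≤ max ((1 - δ) ^ γ) 1 * logRpow ρ γ t * (1 + Real.log t) +
          Real.log t ^ ρ * (max 1 (γ + 1)⁻¹ * (t : ℝ) ^ (γ + 1)) / (δ * t) := by
        have := logRpow_nonneg ρ γ t
        gcongr
    _ = (max ((1 - δ) ^ γ) 1 * (Real.log t + 1) + max 1 (γ + 1)⁻¹ / δ) * logRpow ρ γ t := by
        rw [logRpow, Real.rpow_add_one htR.ne']
        field_simp
        ring

lemma le_harmConv_logRpow (ρ : ℕ) (γ : ℝ) {δ : ℝ} (hδ : δ ∈ Set.Ioo 0 1) {t : ℕ}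
    (ht : 1 ≤ (1 - δ) * t) :
    min ((1 - δ) ^ γ) 1 * ((Real.log t + Real.log (1 - δ)) ^ ρ * (t : ℝ) ^ γ) *
      (Real.log t + Real.log δ) ≤ harmConv (logRpow ρ γ) t := by
  obtain ⟨hδ0, hδ1⟩ := hδ
  set K := ⌊δ * t⌋₊
  have htR : (0 : ℝ) < t := by nlinarith
  have hδK : δ * t < K + 1 := Nat.lt_floor_add_one _
  have hKt : K < t := floor_mul_natCast_lt hδ0.le hδ1 (by exact_mod_cast htR)
  have hlog0 : 0 ≤ Real.log t + Real.log (1 - δ) := by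
    rw [← Real.log_mul htR.ne' (by linarith), mul_comm]
    exact Real.log_nonneg ht
  have hb : ∀ k ≤ K, min ((1 - δ) ^ γ) 1 * ((Real.log t + Real.log (1 - δ)) ^ ρ * (t : ℝ) ^ γ)
      ≤ logRpow ρ γ (t - k) :=
    fun k hk => le_logRpow_of_mem_Icc ρ γ hδ1 ht
      (one_sub_mul_le_natCast_sub hδ0.le hk (hk.trans hKt.le)) (Nat.sub_le t k)
  refine le_trans ?_ (le_harmConv (logRpow_nonneg ρ γ) hKt (by positivity) hb)
  gcongr
  rw [← Real.log_mul htR.ne' hδ0.ne', mul_comm]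
  exact Real.log_le_log (by positivity) hδK.le

lemma tendsto_harmConv_logRpow_div (ρ : ℕ) {γ : ℝ} (hγ : -1 < γ) :
    Tendsto (fun t => harmConv (logRpow ρ γ) t / logRpow (ρ + 1) γ t) atTop (𝓝 1) := by
  have hpow : Tendsto (fun δ : ℝ => (1 - δ) ^ γ) (𝓝[>] 0) (𝓝 1) := by
    have h : Tendsto (fun δ : ℝ => (1 - δ) ^ γ) (𝓝 0) (𝓝 ((1 - 0) ^ γ)) :=
      (tendsto_const_nhds.sub tendsto_id).rpow_const (Or.inl (by norm_num))
    simpa using h.mono_left nhdsWithin_le_nhds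
  refine tendsto_of_forall_eventually_between (p := 𝓝[>] (0 : ℝ))
    (clo := fun δ => min ((1 - δ) ^ γ) 1) (chi := fun δ => max ((1 - δ) ^ γ) 1)
    (lo := fun δ (t : ℕ) => min ((1 - δ) ^ γ) 1 *
      ((Real.log t + Real.log (1 - δ)) / Real.log t) ^ ρ * ((Real.log t + Real.log δ) / Real.log t))
    (hi := fun δ (t : ℕ) => max ((1 - δ) ^ γ) 1 * ((Real.log t + 1) / Real.log t) +
      max 1 (γ + 1)⁻¹ / δ / Real.log t)
    (by simpa using hpow.min (tendsto_const_nhds (x := (1 : ℝ))))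
    (by simpa using hpow.max (tendsto_const_nhds (x := (1 : ℝ)))) (fun δ => ?_) (fun δ => ?_) ?_
  · simpa using (tendsto_const_nhds.mul ((tendsto_log_add_div_log _).pow ρ)).mul
      (tendsto_log_add_div_log _)
  · simpa using (tendsto_const_nhds.mul (tendsto_log_add_div_log 1)).add
      (tendsto_const_nhds.div_atTop tendsto_log_natCast_atTop)
  filter_upwards [Ioo_mem_nhdsGT (show (0 : ℝ) < 1 / 2 by norm_num)] with δ hδ
  have hδ' : δ ∈ Set.Ioo 0 1 := ⟨hδ.1, by linarith [hδ.2]⟩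
  filter_upwards [eventually_ge_atTop 2] with t ht
  have htR : (2 : ℝ) ≤ t := by exact_mod_cast ht
  have hlogt : 0 < Real.log t := Real.log_pos (by linarith)
  constructor
  · rw [le_div_iff₀ (logRpow_pos _ γ ht)]
    refine le_trans (le_of_eq ?_) (le_harmConv_logRpow ρ γ hδ' (by nlinarith [hδ.2]))
    rw [logRpow, div_pow]
    field_simp
    ring
  · rw [div_le_iff₀ (logRpow_pos _ γ ht)]
    refine (harmConv_logRpow_le ρ hγ hδ' (by omega)).trans (le_of_eq ?_)
    simp only [logRpow]
    field_simp
    ring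

lemma isLittleO_inv_logRpow (ρ : ℕ) {γ : ℝ} (hγ : -1 < γ) :
    (fun t : ℕ => (t : ℝ)⁻¹) =o[atTop] logRpow ρ γ := by
  have hpow : Tendsto (fun t : ℕ => (t : ℝ) ^ (γ + 1)) atTop atTop :=
    (tendsto_rpow_atTop (by linarith)).comp tendsto_natCast_atTop_atTop
  have hprod : Tendsto (fun t : ℕ => Real.log t ^ ρ * (t : ℝ) ^ (γ + 1)) atTop atTop := by
    refine tendsto_atTop_mono' _ ?_ hpow
    filter_upwards [tendsto_log_natCast_atTop.eventually_ge_atTop 1] with t ht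
    exact le_mul_of_one_le_left (by positivity) (one_le_pow₀ ht)
  refine (isLittleO_iff_tendsto' ?_).2 (hprod.inv_tendsto_atTop.congr' ?_)
  · filter_upwards [eventually_logRpow_ne_zero ρ γ] with t ht h
    exact absurd h ht
  · filter_upwards [eventually_gt_atTop 0] with t ht
    have htR : (0 : ℝ) < t := by exact_mod_cast ht
    rw [Pi.inv_apply, logRpow, Real.rpow_add_one htR.ne']
    field_simp

lemma isEquivalent_harmConv_logRpow (ρ : ℕ) {γ : ℝ} (hγ : -1 < γ) :
    harmConv (logRpow ρ γ) ~[atTop] logRpow (ρ + 1) γ :=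
  (isEquivalent_iff_tendsto_one (eventually_logRpow_ne_zero _ γ)).2
    (tendsto_harmConv_logRpow_div ρ hγ)

theorem isEquivalent_negLogDiff_rpow {γ : ℝ} (hγ : -1 < γ) (r : ℕ) :
    negLogDiff r (fun m => (m : ℝ) ^ γ) ~[atTop] logRpow r γ := by
  induction r with
  | zero =>
    refine EventuallyEq.isEquivalent ?_
    filter_upwards [eventually_ne_atTop 0] with t ht
    simp [negLogDiff_zero _ ht, logRpow]
  | succ r ih =>
    have h := isEquivalent_harmConv_logRpow r hγ
    rw [show negLogDiff (r + 1) (fun m => (m : ℝ) ^ γ) = harmConv (negLogDiff r _) from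
      funext (negLogDiff_succ r _)]
    exact (isEquivalent_harmConv ih (logRpow_nonneg r γ)
      ((isLittleO_inv_logRpow (r + 1) hγ).trans_isBigO h.isBigO_symm)).trans h

open Filter in
theorem stmt4_general (γ : ℝ) (hγ : -1 < γ) (r : ℕ) :
    Tendsto (fun t : ℕ =>
        (∑ j ∈ Finset.range t, logCoef r j * ((t : ℝ) - j) ^ γ)
          / (Real.log t ^ r * (t : ℝ) ^ γ)) atTop (nhds 1) := by
  refine ((isEquivalent_iff_tendsto_one (eventually_logRpow_ne_zero r γ)).1
    (isEquivalent_negLogDiff_rpow hγ r)).congr fun t => ?_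
  simp only [Pi.div_apply, negLogDiff, logRpow]
  congr 1
  exact sum_congr rfl fun j hj => by rw [Nat.cast_sub (mem_range.1 hj).le]

open Filter in
theorem stmt4 (γ : ℝ) (hγ : -1 < γ) (r : ℕ) (hr : 0 < r) :
    Tendsto (fun t : ℕ =>
        (∑ j ∈ Finset.range t, logCoef r j * ((t : ℝ) - j) ^ γ)
          / (Real.log t ^ r * (t : ℝ) ^ γ)) atTop (nhds 1) :=
  stmt4_general γ hγ r
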